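/- arXiv:2201.06036 — 5 statements merged into one kernel-verified Lean document; each statement's English description precedes it below -/
import Mathlib

section
/- Every n×n complex matrix A with spectral norm at most 1 can be written as a finite convex combination of unitary n×n matrices. -/
open scoped Matrix BigOperators

noncomputable def specNorm {n : ℕ} (A : Matrix (Fin n) (Fin n) ℂ) : ℝ :=
  ‖Matrix.toEuclideanCLM (𝕜 := ℂ) A‖

noncomputable def singularValues {n : ℕ} (A : Matrix (Fin n) (Fin n) ℂ) : Fin n → ℝ :=
  fun i => Real.sqrt
    (((Matrix.isHermitian_conjTranspose_mul_self A).eigenvalues ∘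
      Tuple.sort (Matrix.isHermitian_conjTranspose_mul_self A).eigenvalues) i.rev)

/-!
Polar decomposition: `A = W |A|` with `W` unitary and `|A| = √(A⋆A)` a positive contraction.
`W` exists because `‖|A| x‖ = ‖A x‖`, so `|A| x ↦ A x` is an isometry on the range of `|A|`,
which extends to a unitary. A selfadjoint contraction `a` is the real part `(u + u⋆) / 2` of the
unitary `u = a + i √(1 - a²)`, hence `A = (W u + W u⋆) / 2`.
-/

section CStarAlgebra

variable {A : Type*} [CStarAlgebra A] [PartialOrder A] [StarOrderedRing A]

lemma IsSelfAdjoint.exists_mem_unitary_eq_realPart {a : A} (ha : IsSelfAdjoint a)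
    (ha1 : ‖a‖ ≤ 1) : ∃ u ∈ unitary A, a = (2⁻¹ : ℝ) • (u + star u) := by
  refine ⟨_, (selfAdjoint.unitarySelfAddISMul ⟨a, ha⟩ ha1).2, ?_⟩
  rw [← realPart_apply_coe]
  exact congr($(selfAdjoint.realPart_unitarySelfAddISMul ⟨a, ha⟩ ha1).val).symm

lemma exists_mem_unitary_eq_midpoint_of_eq_mul {x w a : A} (hw : w ∈ unitary A)
    (ha : IsSelfAdjoint a) (ha1 : ‖a‖ ≤ 1) (hx : x = w * a) :
    ∃ u ∈ unitary A, ∃ v ∈ unitary A, x = (2⁻¹ : ℝ) • (u + v) := by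
  obtain ⟨u, hu, rfl⟩ := ha.exists_mem_unitary_eq_realPart ha1
  exact ⟨w * u, mul_mem hw hu, w * star u, mul_mem hw (Unitary.star_mem hu), by
    rw [hx, mul_smul_comm, mul_add]⟩

end CStarAlgebra

namespace ContinuousLinearMap

variable {E : Type*} [NormedAddCommGroup E] [InnerProductSpace ℂ E] [FiniteDimensional ℂ E]

lemma exists_mem_unitary_eq_mul_of_norm_apply_eq {S T : E →L[ℂ] E}
    (h : ∀ x, ‖S x‖ = ‖T x‖) : ∃ w ∈ unitary (E →L[ℂ] E), T = w * S := by
  have hker : LinearMap.ker (S : E →ₗ[ℂ] E) ≤ LinearMap.ker (T : E →ₗ[ℂ] E) := fun x hx => by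
    rw [LinearMap.mem_ker, coe_coe] at hx ⊢
    rw [← norm_eq_zero, ← h x, hx, norm_zero]
  let L : LinearMap.range (S : E →ₗ[ℂ] E) →ₗ[ℂ] E :=
    (LinearMap.ker (S : E →ₗ[ℂ] E)).liftQ T hker ∘ₗ (S : E →ₗ[ℂ] E).quotKerEquivRange.symm
  have hL : ∀ x, L ⟨S x, LinearMap.mem_range_self (S : E →ₗ[ℂ] E) x⟩ = T x := fun x =>
    congrArg _ ((S : E →ₗ[ℂ] E).quotKerEquivRange_symm_apply_image x _)
  have hL_norm : ∀ y, ‖L y‖ = ‖y‖ := by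
    rintro ⟨_, x, rfl⟩
    exact (congrArg norm (hL x)).trans (h x).symm
  let Li : LinearMap.range (S : E →ₗ[ℂ] E) →ₗᵢ[ℂ] E := { L with norm_map' := hL_norm }
  let W : E ≃ₗᵢ[ℂ] E := Li.extend.toLinearIsometryEquiv rfl
  refine ⟨Unitary.linearIsometryEquiv.symm W, (Unitary.linearIsometryEquiv.symm W).2, ?_⟩
  ext x
  exact (hL x).symm.trans (Li.extend_apply ⟨S x, LinearMap.mem_range_self _ x⟩).symm

lemma norm_cfcAbs_apply (T : E →L[ℂ] E) (x : E) : ‖CFC.abs T x‖ = ‖T x‖ := by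
  have h : (CFC.abs T).adjoint ∘L CFC.abs T = T.adjoint ∘L T := by
    rw [← star_eq_adjoint, ← star_eq_adjoint, (CFC.abs_nonneg T).isSelfAdjoint.star_eq]
    exact CFC.abs_mul_abs T
  rw [← sq_eq_sq₀ (norm_nonneg _) (norm_nonneg _), apply_norm_sq_eq_inner_adjoint_left,
    apply_norm_sq_eq_inner_adjoint_left, h]

lemma exists_mem_unitary_eq_mul_cfcAbs (T : E →L[ℂ] E) :
    ∃ w ∈ unitary (E →L[ℂ] E), T = w * CFC.abs T :=
  exists_mem_unitary_eq_mul_of_norm_apply_eq (norm_cfcAbs_apply T)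

lemma exists_mem_unitary_eq_midpoint_of_norm_le_one {T : E →L[ℂ] E} (hT : ‖T‖ ≤ 1) :
    ∃ u ∈ unitary (E →L[ℂ] E), ∃ v ∈ unitary (E →L[ℂ] E), T = (2⁻¹ : ℝ) • (u + v) :=
  have ⟨_, hw, hT_eq⟩ := T.exists_mem_unitary_eq_mul_cfcAbs
  exists_mem_unitary_eq_midpoint_of_eq_mul hw (CFC.abs_nonneg T).isSelfAdjoint
    (CFC.norm_abs.trans_le hT) hT_eq

end ContinuousLinearMap

/-- Every contraction is a finite convex combination of unitary matrices. -/
theorem contraction_eq_convexCombination_unitary {n : ℕ}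
    (A : Matrix (Fin n) (Fin n) ℂ) (hA : specNorm A ≤ 1) :
    ∃ (m : ℕ) (α : Fin m → ℝ) (U : Fin m → Matrix (Fin n) (Fin n) ℂ),
      (∀ i, U i ∈ Matrix.unitaryGroup (Fin n) ℂ) ∧
      (∀ i, 0 ≤ α i) ∧ (∑ i, α i = 1) ∧
      A = ∑ i, (α i : ℂ) • U i := by
  let e := Matrix.toEuclideanCLM (n := Fin n) (𝕜 := ℂ)
  obtain ⟨u, hu, v, hv, huv⟩ :=
    ContinuousLinearMap.exists_mem_unitary_eq_midpoint_of_norm_le_one (T := e A) hA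
  refine ⟨2, ![2⁻¹, 2⁻¹], ![e.symm u, e.symm v], ?_, ?_, ?_, ?_⟩
  · intro i
    fin_cases i
    exacts [Unitary.map_mem e.symm hu, Unitary.map_mem e.symm hv]
  · intro i
    fin_cases i <;> norm_num
  · norm_num
  · calc A = e.symm (e A) := (e.symm_apply_apply A).symm
      _ = _ := by
        rw [huv, ← Complex.coe_smul, map_smul, map_add, smul_add, Fin.sum_univ_two]
        rfl
end

section
/- Every matrix in the unit ball of the spectral norm on 3×3 complex matrices can be written as a convex combination of at most 4 unitary 3×3 matrices (i.e., the Carathéodory number of B(3) with respect to U(3) is at most 4). -/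
open scoped Matrix BigOperators

/-!
Every contraction is the midpoint of two unitaries. If `a` is an invertible contraction, its
polar decomposition `a = w |a|` has `w` unitary, and the positive contraction `|a|` is the real
part of the unitary `u = |a| + i √(1 - |a|²)`, so `a = (w u + w u⋆) / 2`. In finite dimensions
the set of such midpoints is compact, being the image of `U(n) × U(n)`, and every contraction
`a` is a limit of the invertible contractions `(a + t) / (1 + t)`, `t → 0⁺`, since `-t` avoids
the finite spectrum of `a` for small `t > 0`.
-/

open Filter Topology
open scoped Matrix.Norms.L2Operator ComplexStarModule

lemma mem_closure_setOf_isUnit_norm_le_one {A : Type*} [NormedRing A] [NormedAlgebra ℝ A]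
    [NormOneClass A] {a : A} (hσ : (spectrum ℝ a).Finite) (ha : ‖a‖ ≤ 1) :
    a ∈ closure {b : A | IsUnit b ∧ ‖b‖ ≤ 1} := by
  set f : ℝ → A := fun t => (1 + t)⁻¹ • (algebraMap ℝ A t + a)
  have hf : Tendsto f (𝓝[>] 0) (𝓝 a) := by
    have : ContinuousAt f 0 :=
      ((continuousAt_const.add continuousAt_id).inv₀ (by norm_num)).smul (by fun_prop)
    simpa [f] using this.tendsto.mono_left nhdsWithin_le_nhds
  have hσ_neg : (spectrum ℝ (-a)).Finite := spectrum.neg_eq (R := ℝ) a ▸ hσ.neg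
  have hgood : ∀ᶠ t in 𝓝[>] 0, 0 < t ∧ t ∉ spectrum ℝ (-a) := by
    have : (spectrum ℝ (-a) \ {0})ᶜ ∈ 𝓝 (0 : ℝ) :=
      hσ_neg.sdiff.isClosed.compl_mem_nhds (by simp)
    filter_upwards [self_mem_nhdsWithin, mem_nhdsWithin_of_mem_nhds this] with t ht htσ
    exact ⟨ht, fun h => htσ ⟨h, ht.ne'⟩⟩
  refine mem_closure_of_tendsto hf (hgood.mono fun t ⟨ht, htσ⟩ => ⟨?_, ?_⟩)
  · have : IsUnit (algebraMap ℝ A t + a) := by simpa using spectrum.notMem_iff.1 htσ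
    exact this.smul (Units.mk0 (1 + t)⁻¹ (by positivity))
  · calc ‖f t‖ = (1 + t)⁻¹ * ‖algebraMap ℝ A t + a‖ := by
          rw [norm_smul, Real.norm_of_nonneg (by positivity)]
      _ ≤ (1 + t)⁻¹ * (1 + t) := by
          gcongr
          refine (norm_add_le _ _).trans ?_
          rw [norm_algebraMap', Real.norm_of_nonneg ht.le]
          linarith
      _ = 1 := inv_mul_cancel₀ (by positivity)

section CStarAlgebra

variable {A : Type*} [CStarAlgebra A]

lemma IsUnit.exists_mem_unitary_eq_mul_cfcAbs [PartialOrder A] [StarOrderedRing A] {a : A}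
    (ha : IsUnit a) : ∃ w ∈ unitary A, a = w * CFC.abs a := by
  have hp : IsUnit (CFC.abs a) := by
    rw [← isUnit_mul_self_iff, CFC.abs_mul_abs]
    exact ha.star.mul ha
  set p := hp.unit
  have hp_star : star p = p := Units.ext (CFC.abs_nonneg a).isSelfAdjoint.star_eq
  refine ⟨a * ↑p⁻¹, (ha.mul p⁻¹.isUnit).mem_unitary_of_star_mul_self ?_, ?_⟩
  · calc star (a * ↑p⁻¹) * (a * ↑p⁻¹) = ↑(star p)⁻¹ * (star a * a) * ↑p⁻¹ := by
          simp [mul_assoc, Units.coe_star_inv]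
      _ = 1 := by
          rw [hp_star, ← CFC.abs_mul_abs]
          simp [p, mul_assoc]
  · rw [mul_assoc, ← hp.unit_spec, Units.inv_mul, mul_one]

lemma IsSelfAdjoint.exists_mem_unitary_eq_midpoint_star {a : A} (ha : IsSelfAdjoint a)
    (ha_norm : ‖a‖ ≤ 1) : ∃ u ∈ unitary A, a = midpoint ℝ u (star u) := by
  let _ := CStarAlgebra.spectralOrder A
  let _ := CStarAlgebra.spectralOrderedRing A
  set u := selfAdjoint.unitarySelfAddISMul ⟨a, ha⟩ ha_norm
  have hu : ℜ (u : A) = ⟨a, ha⟩ := selfAdjoint.realPart_unitarySelfAddISMul ⟨a, ha⟩ ha_norm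
  refine ⟨u, u.2, ?_⟩
  rw [midpoint_eq_smul_add, invOf_eq_inv, ← realPart_apply_coe, hu]

variable (A) in
def unitaryMidpoints : Set A := Set.image2 (midpoint ℝ) (unitary A) (unitary A)

lemma IsUnit.mem_unitaryMidpoints {a : A} (ha : IsUnit a) (ha_norm : ‖a‖ ≤ 1) :
    a ∈ unitaryMidpoints A := by
  let _ := CStarAlgebra.spectralOrder A
  let _ := CStarAlgebra.spectralOrderedRing A
  obtain ⟨w, hw, hpolar⟩ := ha.exists_mem_unitary_eq_mul_cfcAbs
  obtain ⟨u, hu, hmid⟩ := (CFC.abs_nonneg a).isSelfAdjoint.exists_mem_unitary_eq_midpoint_star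
    (CFC.norm_abs.trans_le ha_norm)
  refine ⟨w * u, mul_mem hw hu, w * star u, mul_mem hw (Unitary.star_mem hu), ?_⟩
  rw [hpolar, hmid, midpoint_eq_smul_add, midpoint_eq_smul_add, mul_smul_comm, mul_add]

lemma isCompact_unitary [ProperSpace A] : IsCompact (unitary A : Set A) := by
  obtain _ | _ := subsingleton_or_nontrivial A
  · exact Set.subsingleton_of_subsingleton.isCompact
  refine Metric.isCompact_of_isClosed_isBounded isClosed_unitary ?_
  exact isBounded_iff_forall_norm_le.2 ⟨1, fun u hu => (CStarRing.norm_of_mem_unitary hu).le⟩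

lemma isClosed_unitaryMidpoints [ProperSpace A] : IsClosed (unitaryMidpoints A) := by
  rw [unitaryMidpoints, ← Set.image_prod]
  refine ((isCompact_unitary.prod isCompact_unitary).image ?_).isClosed
  simp_rw [midpoint_eq_smul_add]
  fun_prop

lemma mem_unitaryMidpoints_of_norm_le_one [ProperSpace A] [NormOneClass A] {a : A}
    (hσ : (spectrum ℝ a).Finite) (ha : ‖a‖ ≤ 1) : a ∈ unitaryMidpoints A :=
  closure_minimal (fun _ hb => hb.1.mem_unitaryMidpoints hb.2) isClosed_unitaryMidpoints
    (mem_closure_setOf_isUnit_norm_le_one hσ ha)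

end CStarAlgebra

/-- Carathéodory number: every 3×3 contraction is a convex combination of at most
4 unitary matrices. -/
theorem contraction_convexCombination_four_unitaries
    (A : Matrix (Fin 3) (Fin 3) ℂ) (hA : specNorm A ≤ 1) :
    ∃ (α : Fin 4 → ℝ) (U : Fin 4 → Matrix (Fin 3) (Fin 3) ℂ),
      (∀ i, U i ∈ Matrix.unitaryGroup (Fin 3) ℂ) ∧
      (∀ i, 0 ≤ α i) ∧ (∑ i, α i = 1) ∧
      A = ∑ i, (α i : ℂ) • U i := by
  obtain ⟨U, hU, V, hV, rfl⟩ := mem_unitaryMidpoints_of_norm_le_one A.finite_real_spectrum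
    (hA : ‖A‖ ≤ 1)
  refine ⟨![1 / 2, 1 / 2, 0, 0], ![U, V, 1, 1], ?_, ?_, ?_, ?_⟩
  · intro i
    fin_cases i
    exacts [hU, hV, one_mem _, one_mem _]
  · intro i
    fin_cases i <;> norm_num
  · simp [Fin.sum_univ_four]
    norm_num
  · simp [Fin.sum_univ_four, midpoint_eq_smul_add, ← Complex.coe_smul]
end

section
/- A matrix norm on n×n complex matrices is unitarily invariant if and only if there exists a symmetric gauge function Φ on ℝⁿ such that ‖A‖ = Φ(σ₁(A),...,σₙ(A)) for all A, where σᵢ(A) are the singular values of A (von Neumann's theorem). -/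
open scoped Matrix BigOperators

/-!
A unitarily invariant `N` only sees the singular values: the singular value decomposition
`A = U * diagonal σ * V` gives `N A = N (diagonal σ)`, so `Φ x := N (diagonal x)` represents `N`.
This `Φ` inherits the norm axioms from `N`, and it is symmetric and absolute because permuting or
flipping signs of diagonal entries is conjugation, resp. multiplication, by a unitary permutation
or sign matrix. Conversely, `(U * A * V)ᴴ * (U * A * V)` is unitarily similar to `Aᴴ * A`, so
both have the same characteristic polynomial, hence the same eigenvalues, so `A` and `U * A * V`
have the same singular values.
-/

namespace Matrix

variable {ι R 𝕜 : Type*} [Fintype ι] [DecidableEq ι]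

lemma permMatrix_mul_diagonal_mul_permMatrix_inv [Semiring R] (σ : Equiv.Perm ι) (d : ι → R) :
    σ.permMatrix R * diagonal d * σ⁻¹.permMatrix R = diagonal (d ∘ σ) := by
  rw [PEquiv.toMatrix_toPEquiv_mul, PEquiv.mul_toMatrix_toPEquiv, submatrix_submatrix,
    Equiv.Perm.inv_def, Equiv.symm_symm, Function.comp_id, Function.id_comp,
    submatrix_diagonal_equiv]

lemma permMatrix_mem_unitaryGroup [CommRing R] [StarRing R] (σ : Equiv.Perm ι) :
    σ.permMatrix R ∈ unitaryGroup ι R := by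
  rw [mem_unitaryGroup_iff, star_eq_conjTranspose, conjTranspose_permMatrix, ← permMatrix_mul,
    inv_mul_cancel, permMatrix_one]

lemma diagonal_mem_unitaryGroup [CommRing R] [StarRing R] {d : ι → R}
    (hd : ∀ i, star (d i) * d i = 1) : diagonal d ∈ unitaryGroup ι R := by
  rw [mem_unitaryGroup_iff', star_eq_conjTranspose, diagonal_conjTranspose, diagonal_mul_diagonal,
    ← diagonal_one]
  exact congrArg diagonal (funext hd)

variable [RCLike 𝕜]

lemma exists_unitary_mul_diagonal_eq_of_conjTranspose_mul_self_eq (B : Matrix ι ι 𝕜)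
    (s : ι → ℝ) (hB : Bᴴ * B = diagonal fun i => ((s i ^ 2 : ℝ) : 𝕜)) :
    ∃ U ∈ unitaryGroup ι 𝕜, U * diagonal (fun i => (s i : 𝕜)) = B := by
  -- The nonzero columns of `B`, normalised, are orthonormal; `U` is any orthonormal basis
  -- extending them.
  let col : ι → EuclideanSpace 𝕜 ι := fun i => WithLp.toLp 2 fun k => B k i
  have inner_col (i j : ι) : inner 𝕜 (col i) (col j) = (Bᴴ * B) i j := by
    simp [col, EuclideanSpace.inner_eq_star_dotProduct, mul_apply, dotProduct, mul_comm]
  have hON : Orthonormal 𝕜 ({i | s i ≠ 0}.domRestrict fun i => (s i : 𝕜)⁻¹ • col i) := by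
    rw [orthonormal_iff_ite]
    rintro ⟨i, hi⟩ ⟨j, hj⟩
    simp only [Set.domRestrict_apply, inner_smul_left, inner_smul_right, inner_col, hB,
      diagonal_apply, Subtype.mk.injEq]
    split_ifs with hij
    · subst hij
      have : (s i : 𝕜) ≠ 0 := RCLike.ofReal_ne_zero.mpr hi
      simp only [map_inv₀, RCLike.conj_ofReal, RCLike.ofReal_pow]
      field_simp
    · simp
  obtain ⟨b, hb⟩ := hON.exists_orthonormalBasis_extension_of_card_eq (by simp)
  refine ⟨(EuclideanSpace.basisFun ι 𝕜).toBasis.toMatrix b.toBasis,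
    (EuclideanSpace.basisFun ι 𝕜).toMatrix_orthonormalBasis_mem_unitary b, ?_⟩
  ext k i
  rw [mul_diagonal]
  by_cases hi : s i = 0
  · have hcol : col i = 0 := by
      rw [← inner_self_eq_zero (𝕜 := 𝕜), inner_col, hB, diagonal_apply_eq, hi]
      simp
    simpa [hi] using (congrArg (fun v : EuclideanSpace 𝕜 ι => v k) hcol).symm
  · have : (s i : 𝕜) ≠ 0 := RCLike.ofReal_ne_zero.mpr hi
    simp only [OrthonormalBasis.coe_toBasis, Module.Basis.toMatrix_apply, hb i hi, map_smul,
      Finsupp.coe_smul, Pi.smul_apply, OrthonormalBasis.coe_toBasis_repr_apply,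
      EuclideanSpace.basisFun_repr, smul_eq_mul, col]
    field_simp

lemma exists_unitary_mul_diagonal_sqrt_eigenvalues_mul_unitary (A : Matrix ι ι 𝕜) :
    ∃ U ∈ unitaryGroup ι 𝕜, ∃ V ∈ unitaryGroup ι 𝕜, A = U * diagonal (fun i =>
      (√((isHermitian_conjTranspose_mul_self A).eigenvalues i) : 𝕜)) * V := by
  set hH := isHermitian_conjTranspose_mul_self A
  let W : Matrix ι ι 𝕜 := hH.eigenvectorUnitary
  have hW : (A * W)ᴴ * (A * W) = diagonal fun i => ((√(hH.eigenvalues i) ^ 2 : ℝ) : 𝕜) := by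
    rw [conjTranspose_mul, ← star_eq_conjTranspose, Matrix.mul_assoc, ← Matrix.mul_assoc Aᴴ,
      ← Matrix.mul_assoc]
    simpa [Real.sq_sqrt (eigenvalues_conjTranspose_mul_self_nonneg A _), Function.comp_def,
      Unitary.conjStarAlgAut_star_apply] using hH.conjStarAlgAut_star_eigenvectorUnitary
  obtain ⟨U, hU, hUA⟩ := exists_unitary_mul_diagonal_eq_of_conjTranspose_mul_self_eq _ _ hW
  refine ⟨U, hU, star W, Unitary.star_mem hH.eigenvectorUnitary.2, ?_⟩
  rw [hUA, Matrix.mul_assoc, mem_unitaryGroup_iff.mp hH.eigenvectorUnitary.2, Matrix.mul_one]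

lemma charpoly_conjTranspose_mul_self_unitary_mul_mul {U V : Matrix ι ι 𝕜}
    (hU : U ∈ unitaryGroup ι 𝕜) (hV : V ∈ unitaryGroup ι 𝕜) (A : Matrix ι ι 𝕜) :
    ((U * A * V)ᴴ * (U * A * V)).charpoly = (Aᴴ * A).charpoly := by
  have hUU : Uᴴ * U = 1 := mem_unitaryGroup_iff'.mp hU
  have hVV : V * Vᴴ = 1 := mem_unitaryGroup_iff.mp hV
  calc ((U * A * V)ᴴ * (U * A * V)).charpoly = (Vᴴ * (Aᴴ * A * V)).charpoly := by
        simp only [conjTranspose_mul, Matrix.mul_assoc, ← Matrix.mul_assoc Uᴴ, hUU,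
          Matrix.one_mul]
    _ = (Aᴴ * A).charpoly := by
        rw [charpoly_mul_comm, Matrix.mul_assoc, hVV, Matrix.mul_one]

def IsUnitarilyInvariant {α : Type*} (N : Matrix ι ι 𝕜 → α) : Prop :=
  ∀ U V : Matrix ι ι 𝕜, U ∈ unitaryGroup ι 𝕜 → V ∈ unitaryGroup ι 𝕜 → ∀ A, N (U * A * V) = N A

namespace IsUnitarilyInvariant

variable {α : Type*} {N : Matrix ι ι 𝕜 → α}

lemma apply_diagonal_comp (hN : IsUnitarilyInvariant N) (d : ι → 𝕜) (σ : Equiv.Perm ι) :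
    N (diagonal (d ∘ σ)) = N (diagonal d) := by
  rw [← permMatrix_mul_diagonal_mul_permMatrix_inv,
    hN _ _ (permMatrix_mem_unitaryGroup _) (permMatrix_mem_unitaryGroup _)]

lemma apply_diagonal_ofReal_abs (hN : IsUnitarilyInvariant N) (x : ι → ℝ) :
    N (diagonal fun i => ((|x i| : ℝ) : 𝕜)) = N (diagonal fun i => (x i : 𝕜)) := by
  have hsign : (diagonal fun i => ((|x i| : ℝ) : 𝕜)) =
      diagonal (fun i => if x i < 0 then -1 else 1) * diagonal (fun i => (x i : 𝕜)) * 1 := by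
    rw [Matrix.mul_one, diagonal_mul_diagonal]
    congr 1
    funext i
    split_ifs with hx
    · simp [abs_of_neg hx]
    · simp [abs_of_nonneg (not_lt.mp hx)]
  rw [hsign, hN _ _ (diagonal_mem_unitaryGroup fun i => by split_ifs <;> simp) (one_mem _)]

lemma apply_eq_diagonal_sqrt_eigenvalues (hN : IsUnitarilyInvariant N) (A : Matrix ι ι 𝕜) :
    N A = N (diagonal fun i => (√((isHermitian_conjTranspose_mul_self A).eigenvalues i) : 𝕜)) := by
  obtain ⟨U, hU, V, hV, hA⟩ := exists_unitary_mul_diagonal_sqrt_eigenvalues_mul_unitary A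
  conv_lhs => rw [hA]
  exact hN U V hU hV _

end IsUnitarilyInvariant

end Matrix

open Matrix

lemma singularValues_unitary_mul_mul {n : ℕ} {U V : Matrix (Fin n) (Fin n) ℂ}
    (hU : U ∈ unitaryGroup (Fin n) ℂ) (hV : V ∈ unitaryGroup (Fin n) ℂ)
    (A : Matrix (Fin n) (Fin n) ℂ) :
    singularValues (U * A * V) = singularValues A := by
  have h := (IsHermitian.eigenvalues_eq_eigenvalues_iff
    (isHermitian_conjTranspose_mul_self (U * A * V)) (isHermitian_conjTranspose_mul_self A)).mpr
    (charpoly_conjTranspose_mul_self_unitary_mul_mul hU hV A)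
  unfold singularValues
  rw [h]

lemma Matrix.IsUnitarilyInvariant.apply_eq_diagonal_singularValues {n : ℕ} {α : Type*}
    {N : Matrix (Fin n) (Fin n) ℂ → α} (hN : IsUnitarilyInvariant N)
    (A : Matrix (Fin n) (Fin n) ℂ) :
    N A = N (diagonal fun i => (singularValues A i : ℂ)) := by
  rw [hN.apply_eq_diagonal_sqrt_eigenvalues A]
  -- `singularValues A` is, by definition, `√ ∘ eigenvalues` reordered by this permutation.
  exact (hN.apply_diagonal_comp _ (Fin.revPerm.trans (Tuple.sort _))).symm

theorem vonNeumann_unitarilyInvariant_iff_gauge_general {n : ℕ}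
    (N : Matrix (Fin n) (Fin n) ℂ → ℝ)
    (hN0 : ∀ A, 0 ≤ N A) (hNzero : ∀ A, N A = 0 ↔ A = 0)
    (hNsmul : ∀ (c : ℂ) A, N (c • A) = ‖c‖ * N A)
    (hNadd : ∀ A B, N (A + B) ≤ N A + N B) :
    (∀ (U V : Matrix (Fin n) (Fin n) ℂ), U ∈ Matrix.unitaryGroup (Fin n) ℂ →
        V ∈ Matrix.unitaryGroup (Fin n) ℂ → ∀ A, N (U * A * V) = N A) ↔
    ∃ Φ : (Fin n → ℝ) → ℝ,
      (∀ x, 0 ≤ Φ x) ∧ (∀ x, Φ x = 0 ↔ x = 0) ∧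
      (∀ (c : ℝ) x, Φ (c • x) = |c| * Φ x) ∧
      (∀ x y, Φ (x + y) ≤ Φ x + Φ y) ∧
      (∀ (e : Equiv.Perm (Fin n)) x, Φ (x ∘ e) = Φ x) ∧
      (∀ x, Φ (fun i => |x i|) = Φ x) ∧
      (∀ A, N A = Φ (singularValues A)) := by
  refine ⟨fun (hN : IsUnitarilyInvariant N) => ⟨fun x => N (diagonal fun i => (x i : ℂ)),
    fun x => hN0 _, fun x => ?_, fun c x => ?_, fun x y => ?_, fun e x => ?_,
    hN.apply_diagonal_ofReal_abs, hN.apply_eq_diagonal_singularValues⟩, ?_⟩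
  · rw [hNzero, diagonal_eq_zero]
    simp [funext_iff]
  · show N _ = |c| * N _
    rw [← Real.norm_eq_abs, ← Complex.norm_real, ← hNsmul, ← diagonal_smul]
    congr with i
    simp
  · simpa only [Pi.add_apply, Complex.ofReal_add, ← diagonal_add] using hNadd _ _
  · exact hN.apply_diagonal_comp (fun i => (x i : ℂ)) e
  · rintro ⟨Φ, -, -, -, -, -, -, hNΦ⟩ U V hU hV A
    rw [hNΦ, hNΦ, singularValues_unitary_mul_mul hU hV]

/-- Von Neumann's theorem: a matrix norm is unitarily invariant iff it is a
symmetric gauge function of the singular values. -/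
theorem vonNeumann_unitarilyInvariant_iff_gauge {n : ℕ}
    (N : Matrix (Fin n) (Fin n) ℂ → ℝ)
    (hN0 : ∀ A, 0 ≤ N A) (hNzero : ∀ A, N A = 0 ↔ A = 0)
    (hNsmul : ∀ (c : ℂ) A, N (c • A) = ‖c‖ * N A)
    (hNadd : ∀ A B, N (A + B) ≤ N A + N B)
    (hNmul : ∀ A B, N (A * B) ≤ N A * N B) :
    (∀ (U V : Matrix (Fin n) (Fin n) ℂ), U ∈ Matrix.unitaryGroup (Fin n) ℂ →
        V ∈ Matrix.unitaryGroup (Fin n) ℂ → ∀ A, N (U * A * V) = N A) ↔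
    ∃ Φ : (Fin n → ℝ) → ℝ,
      (∀ x, 0 ≤ Φ x) ∧ (∀ x, Φ x = 0 ↔ x = 0) ∧
      (∀ (c : ℝ) x, Φ (c • x) = |c| * Φ x) ∧
      (∀ x y, Φ (x + y) ≤ Φ x + Φ y) ∧
      (∀ (e : Equiv.Perm (Fin n)) x, Φ (x ∘ e) = Φ x) ∧
      (∀ x, Φ (fun i => |x i|) = Φ x) ∧
      (∀ A, N A = Φ (singularValues A)) :=
  vonNeumann_unitarilyInvariant_iff_gauge_general N hN0 hNzero hNsmul hNadd
end

section
/- If an n×n contraction A has exactly m singular values strictly less than 1 (and n−m singular values equal to 1), then A admits a unitary dilation of size (n+m)×(n+m): there exist matrices B (n×m), C (m×n), D (m×m) such that the block matrix [[A, B],[C, D]] is unitary. -/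
/-!
Since `‖A‖ ≤ 1`, the eigenvalues `λᵢ` of `Aᴴ * A` lie in `[0, 1]`, and exactly `m` of them are
`< 1`. Diagonalising `Aᴴ * A = Q * diagonal λ * Qᴴ`, the `m × n` matrix `C = R * Qᴴ`, where `R`
consists of the nonzero rows of `diagonal √(1 - λ)`, satisfies `Aᴴ * A + Cᴴ * C = 1`. Hence the
columns of `[A; C]` are orthonormal in `ℂⁿ⁺ᵐ`, and completing them to an orthonormal basis
supplies the remaining columns `[B; D]` of a unitary matrix.
-/

open scoped Matrix BigOperators

namespace Matrix

variable {𝕜 ι κ : Type*} [RCLike 𝕜] [Fintype ι] [Fintype κ] [DecidableEq ι]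

theorem IsHermitian.abs_eigenvalues_le_norm_toEuclideanCLM {H : Matrix ι ι 𝕜}
    (hH : H.IsHermitian) (i : ι) :
    |hH.eigenvalues i| ≤ ‖toEuclideanCLM (𝕜 := 𝕜) H‖ := by
  have hv : toEuclideanCLM (𝕜 := 𝕜) H (hH.eigenvectorBasis i) =
      hH.eigenvalues i • hH.eigenvectorBasis i := by
    rw [← WithLp.toLp_ofLp (x := hH.eigenvectorBasis i), toEuclideanCLM_toLp,
      hH.mulVec_eigenvectorBasis]
    rfl
  simpa [hv, norm_smul, hH.eigenvectorBasis.orthonormal.1 i] using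
    (toEuclideanCLM (𝕜 := 𝕜) H).le_opNorm (hH.eigenvectorBasis i)

theorem norm_toEuclideanCLM_conjTranspose_mul_self (A : Matrix ι ι 𝕜) :
    ‖toEuclideanCLM (𝕜 := 𝕜) (Aᴴ * A)‖ = ‖toEuclideanCLM (𝕜 := 𝕜) A‖ ^ 2 := by
  rw [map_mul, ← star_eq_conjTranspose, map_star, ContinuousLinearMap.star_eq_adjoint, sq]
  exact ContinuousLinearMap.norm_adjoint_comp_self _

theorem eigenvalues_conjTranspose_mul_self_le_sq_norm (A : Matrix ι ι 𝕜) (i : ι) :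
    (isHermitian_conjTranspose_mul_self A).eigenvalues i ≤ ‖toEuclideanCLM (𝕜 := 𝕜) A‖ ^ 2 :=
  norm_toEuclideanCLM_conjTranspose_mul_self A ▸ (le_abs_self _).trans
    ((isHermitian_conjTranspose_mul_self A).abs_eigenvalues_le_norm_toEuclideanCLM i)

theorem exists_conjTranspose_mul_self_eq_diagonal (d : ι → ℝ) (hd : ∀ i, 0 ≤ d i)
    (e : κ ≃ {i // d i ≠ 0}) :
    ∃ R : Matrix κ ι 𝕜, Rᴴ * R = diagonal fun i => (d i : 𝕜) := by
  classical
  set S : Matrix ι ι 𝕜 := diagonal fun i => (√(d i) : 𝕜)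
  have hS : Sᴴ * S = diagonal fun i => (d i : 𝕜) := by
    rw [diagonal_conjTranspose, diagonal_mul_diagonal]
    congr 1; funext i
    simp [← RCLike.ofReal_mul, Real.mul_self_sqrt (hd i)]
  refine ⟨S.submatrix (fun k => (e k : ι)) id, hS ▸ ?_⟩
  ext i j
  simp only [mul_apply, conjTranspose_apply, submatrix_apply, id]
  -- the rows of `S` outside the support of `d` vanish
  rw [e.sum_comp (fun s => star (S s i) * S s j),
    ← Finset.sum_subtype (Finset.univ.filter fun i => d i ≠ 0) (fun _ => Finset.mem_filter_univ _)
      (fun s => star (S s i) * S s j), Finset.sum_filter_of_ne]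
  intro s _ hs hds
  simp [S, diagonal_apply, hds] at hs

theorem IsHermitian.exists_conjTranspose_mul_self_eq_one_sub {H : Matrix ι ι 𝕜}
    (hH : H.IsHermitian) (hle : ∀ i, hH.eigenvalues i ≤ 1)
    (e : κ ≃ {i // hH.eigenvalues i < 1}) :
    ∃ C : Matrix κ ι 𝕜, Cᴴ * C = 1 - H := by
  have hsupp : ∀ i, hH.eigenvalues i < 1 ↔ 1 - hH.eigenvalues i ≠ 0 := fun i => by
    rw [sub_ne_zero, ne_comm, (hle i).lt_iff_ne]
  obtain ⟨R, hR⟩ := exists_conjTranspose_mul_self_eq_diagonal (𝕜 := 𝕜)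
    (fun i => 1 - hH.eigenvalues i) (fun i => sub_nonneg.2 (hle i))
    (e.trans (Equiv.subtypeEquivRight hsupp))
  set U : Matrix ι ι 𝕜 := (hH.eigenvectorUnitary : Matrix ι ι 𝕜)
  refine ⟨R * star U, ?_⟩
  have hU : U * star U = 1 := Unitary.mul_star_self_of_mem hH.eigenvectorUnitary.2
  have hdiag : (diagonal fun i => ((1 - hH.eigenvalues i : ℝ) : 𝕜)) =
      1 - diagonal (RCLike.ofReal ∘ hH.eigenvalues) := by
    rw [← diagonal_one, diagonal_sub]
    simp
  conv_rhs => rw [hH.spectral_theorem, Unitary.conjStarAlgAut_apply]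
  rw [conjTranspose_mul, star_eq_conjTranspose, conjTranspose_conjTranspose,
    ← star_eq_conjTranspose, Matrix.mul_assoc, ← Matrix.mul_assoc Rᴴ, hR, hdiag, Matrix.sub_mul,
    Matrix.one_mul, Matrix.mul_sub, hU, Matrix.mul_assoc]

theorem exists_fromCols_mem_unitaryGroup [DecidableEq κ] {V : Matrix (ι ⊕ κ) ι 𝕜}
    (hV : Vᴴ * V = 1) :
    ∃ W : Matrix (ι ⊕ κ) κ 𝕜, fromCols V W ∈ unitaryGroup (ι ⊕ κ) 𝕜 := by
  set v : ι ⊕ κ → EuclideanSpace 𝕜 (ι ⊕ κ) := Sum.elim (fun j => WithLp.toLp 2 (Vᵀ j)) 0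
  have hv : Orthonormal 𝕜 ((Set.range Sum.inl).domRestrict v) := by
    rw [orthonormal_iff_ite]
    rintro ⟨_, j, rfl⟩ ⟨_, j', rfl⟩
    have hinner : inner 𝕜 (v (Sum.inl j)) (v (Sum.inl j')) = (Vᴴ * V) j j' := by
      simp [v, EuclideanSpace.inner_eq_star_dotProduct, mul_apply, dotProduct, mul_comm]
    simpa [hV, one_apply, Subtype.ext_iff] using hinner
  obtain ⟨b, hb⟩ := hv.exists_orthonormalBasis_extension_of_card_eq finrank_euclideanSpace
  refine ⟨of fun r k => b (Sum.inr k) r, ?_⟩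
  convert (EuclideanSpace.basisFun (ι ⊕ κ) 𝕜).toMatrix_orthonormalBasis_mem_unitary b using 1
  ext r (j | k)
  · simp [Module.Basis.toMatrix_apply, hb _ ⟨j, rfl⟩, v]
  · simp [Module.Basis.toMatrix_apply]

end Matrix

open Matrix

theorem card_filter_singularValues_lt {n : ℕ} (A : Matrix (Fin n) (Fin n) ℂ) {t : ℝ}
    (ht : 0 < t) :
    (Finset.univ.filter fun i => singularValues A i < t).card =
      (Finset.univ.filter fun i =>
        (isHermitian_conjTranspose_mul_self A).eigenvalues i < t ^ 2).card := by
  set hH := isHermitian_conjTranspose_mul_self A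
  refine Finset.card_equiv (Fin.revPerm.trans (Tuple.sort hH.eigenvalues)) fun i => ?_
  simp [singularValues, Real.sqrt_lt' ht]

/-- A contraction with exactly m singular values strictly less than 1 admits a
unitary dilation of size (n+m)×(n+m). -/
theorem unitary_dilation_minimal_size {n m : ℕ}
    (A : Matrix (Fin n) (Fin n) ℂ) (hA : specNorm A ≤ 1)
    (hm : (Finset.univ.filter (fun i => singularValues A i < 1)).card = m) :
    ∃ (B : Matrix (Fin n) (Fin m) ℂ) (C : Matrix (Fin m) (Fin n) ℂ)
      (D : Matrix (Fin m) (Fin m) ℂ),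
      Matrix.fromBlocks A B C D ∈ Matrix.unitaryGroup (Fin n ⊕ Fin m) ℂ := by
  have hH := isHermitian_conjTranspose_mul_self A
  have hle : ∀ i, hH.eigenvalues i ≤ 1 := fun i =>
    (eigenvalues_conjTranspose_mul_self_le_sq_norm A i).trans (pow_le_one₀ (norm_nonneg _) hA)
  have hcard : Fintype.card {i // hH.eigenvalues i < 1} = m := by
    rw [Fintype.card_subtype, ← hm, card_filter_singularValues_lt A one_pos, one_pow]
  obtain ⟨C, hC⟩ :=
    hH.exists_conjTranspose_mul_self_eq_one_sub hle (Fintype.equivFinOfCardEq hcard).symm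
  obtain ⟨W, hW⟩ := exists_fromCols_mem_unitaryGroup (V := fromRows A C) (by
    rw [conjTranspose_fromRows_eq_fromCols_conjTranspose, fromCols_mul_fromRows, hC,
      add_sub_cancel])
  refine ⟨W.toRows₁, C, W.toRows₂, ?_⟩
  rwa [← fromCols_fromRows_eq_fromBlocks, fromRows_toRows]
end

section
/- If the block matrix [[A, B],[C, D]] of size (n+m)×(n+m) is unitary, then every singular value of the n×n block A that is strictly less than 1 contributes to a lower bound: A has at most m singular values strictly less than 1. Equivalently, the minimal dimension of a unitary dilation of a contraction A is n plus the number of singular values of A strictly less than 1. -/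
/-!
Unitarity of `fromBlocks A B C D` gives `Aᴴ * A + Cᴴ * C = 1`, so `1 - Aᴴ * A = Cᴴ * C` has rank
at most `m`. Diagonalizing `Aᴴ * A` shows that this rank is the number of eigenvalues of `Aᴴ * A`
different from `1`, which is at least the number of singular values of `A` below `1`.
-/

open scoped Matrix BigOperators

namespace Matrix

theorem conjTranspose_mul_self_add_of_fromBlocks_mem_unitaryGroup
    {R l o : Type*} [CommRing R] [StarRing R] [Fintype l] [Fintype o] [DecidableEq l]
    [DecidableEq o] {A : Matrix l l R} {B : Matrix l o R} {C : Matrix o l R} {D : Matrix o o R}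
    (h : fromBlocks A B C D ∈ unitaryGroup (l ⊕ o) R) : Aᴴ * A + Cᴴ * C = 1 := by
  have h11 := congrArg toBlocks₁₁ (mem_unitaryGroup_iff'.mp h)
  simpa [star_eq_conjTranspose, fromBlocks_conjTranspose, fromBlocks_multiply,
    ← fromBlocks_one] using h11

theorem IsHermitian.rank_one_sub {𝕜 n : Type*} [RCLike 𝕜] [Fintype n] [DecidableEq n]
    {A : Matrix n n 𝕜} (hA : A.IsHermitian) :
    (1 - A).rank = Fintype.card {i // hA.eigenvalues i ≠ 1} := by
  set U := hA.eigenvectorUnitary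
  have hdiag : 1 - A =
      Unitary.conjStarAlgAut 𝕜 _ U (diagonal fun i => 1 - (hA.eigenvalues i : 𝕜)) := by
    conv_lhs => rw [hA.spectral_theorem]
    rw [← map_one (Unitary.conjStarAlgAut 𝕜 _ U), ← map_sub, ← diagonal_one, diagonal_sub]
    rfl
  rw [hdiag, Unitary.conjStarAlgAut_apply, ← Unitary.coe_star,
    rank_mul_eq_left_of_isUnit_det _ _ (UnitaryGroup.det_isUnit (star U)),
    rank_mul_eq_right_of_isUnit_det _ _ (UnitaryGroup.det_isUnit U), rank_diagonal]
  exact Fintype.card_congr <| Equiv.subtypeEquivRight fun i => by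
    rw [ne_eq, sub_eq_zero, eq_comm]
    exact_mod_cast Iff.rfl

end Matrix

open Matrix in
theorem card_singularValues_lt {n : ℕ} (A : Matrix (Fin n) (Fin n) ℂ) {t : ℝ} (ht : 0 < t) :
    (Finset.univ.filter fun i => singularValues A i < t).card =
      (Finset.univ.filter fun j =>
        (Matrix.isHermitian_conjTranspose_mul_self A).eigenvalues j < t ^ 2).card := by
  refine Finset.card_equiv
    (Fin.revPerm.trans (Tuple.sort (isHermitian_conjTranspose_mul_self A).eigenvalues)) fun i => ?_
  simp [singularValues, Real.sqrt_lt' ht]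

open Matrix ComplexOrder in
/-- If [[A,B],[C,D]] of size (n+m)×(n+m) is unitary, then the n×n block A has at
most m singular values strictly less than 1. -/
theorem singularValues_lt_one_le_dilation_size {n m : ℕ}
    (A : Matrix (Fin n) (Fin n) ℂ) (B : Matrix (Fin n) (Fin m) ℂ)
    (C : Matrix (Fin m) (Fin n) ℂ) (D : Matrix (Fin m) (Fin m) ℂ)
    (h : Matrix.fromBlocks A B C D ∈ Matrix.unitaryGroup (Fin n ⊕ Fin m) ℂ) :
    (Finset.univ.filter (fun i => singularValues A i < 1)).card ≤ m := by
  have hH := isHermitian_conjTranspose_mul_self A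
  have hCC : 1 - Aᴴ * A = Cᴴ * C :=
    sub_eq_of_eq_add' (conjTranspose_mul_self_add_of_fromBlocks_mem_unitaryGroup h).symm
  calc (Finset.univ.filter fun i => singularValues A i < 1).card
      = (Finset.univ.filter fun j => hH.eigenvalues j < 1).card := by
        simpa using card_singularValues_lt A one_pos
    _ ≤ (Finset.univ.filter fun j => hH.eigenvalues j ≠ 1).card :=
        Finset.card_le_card <| Finset.monotone_filter_right _ fun _ _ => ne_of_lt
    _ = (1 - Aᴴ * A).rank := by rw [hH.rank_one_sub, Fintype.card_subtype]
    _ = C.rank := by rw [hCC, rank_conjTranspose_mul_self]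
    _ ≤ m := C.rank_le_height
end
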